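/- Let K be a field of characteristic not 2, λ ∈ K \ {0, ±1}, and E: y² = (x+λ²)(x+1)x. The 2-torsion point W₃ = (0,0) is divisible by 4 in E(K) if and only if there exists c ∈ K with c ∉ {0, ±1, ±1±√2, ±√−1} such that λ = ±((c−1/c)/2)², i.e., λ² = ((c−1/c)/2)⁴. -/

import Mathlib

/-!
On `y² = (x - α₁)(x - α₂)(x - α₃)` the duplication formula makes each `x(2P) - αᵢ` a square:
`x(2P) - αᵢ = (((x - αᵢ)² - (αᵢ - αⱼ)(αᵢ - αₖ)) / 2y)²`.

If `4R = W₃`, write `2R = (ξ, η)`. Then `x(4R) = 0` forces `ξ² = λ²`, and at `R` the formula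
gives squares `ξ = A²`, `ξ + 1 = B²`. Since `(A + B)(B - A) = 1`, the parameter `c = A + B`
has `(c - 1/c)/2 = A`, hence `λ = ±A²`, and `λ ∉ {0, ±1}` rules out the exceptional values of `c`.

Conversely put `a = (c - 1/c)/2`, `b = (c + 1/c)/2`, so `b² = a² + 1` and `a + b = c`. The points
`Q = (a², a²b²)` and `R = (ac(1 + b), abc(1 + a)(1 + b))` lie on the curve with `x(2Q) = 0` and
`x(2R) = a²`. Hence `2Q = W₃`, and `2R = ±Q`; replacing `R` by `-R` if necessary, `4R = W₃`.
-/

/-- The elliptic curve `y² = (x − α₁)(x − α₂)(x − α₃)` as an affine Weierstrass curve. -/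
def cubicCurve {K : Type*} [Field K] (α₁ α₂ α₃ : K) : WeierstrassCurve.Affine K :=
  { a₁ := 0, a₂ := -(α₁ + α₂ + α₃), a₃ := 0,
    a₄ := α₁ * α₂ + α₂ * α₃ + α₃ * α₁, a₆ := -(α₁ * α₂ * α₃) }

/-- `c` avoids the exceptional set `{0, ±1, ±1±√2, ±√−1}`: equivalently `c ≠ 0`, `c ≠ ±1`,
`((c−1/c)/2)² ≠ 1` and `((c−1/c)/2)² ≠ −1`. -/
def GoodParam {K : Type*} [Field K] (c : K) : Prop :=
  c ≠ 0 ∧ c ≠ 1 ∧ c ≠ -1 ∧ ((c - 1 / c) / 2) ^ 2 ≠ 1 ∧ ((c - 1 / c) / 2) ^ 2 ≠ -1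

namespace WeierstrassCurve.Affine.Point

variable {K : Type*} [Field K] [DecidableEq K] {W : WeierstrassCurve.Affine K} {x y x' y' : K}

lemma exists_eq_some_of_two_smul_eq_some {P : W.Point} {h' : W.Nonsingular x' y'}
    (hP : 2 • P = some x' y' h') :
    ∃ x y, ∃ h : W.Nonsingular x y, P = some x y h ∧ y ≠ W.negY x y ∧
      W.addX x x (W.slope x x y y) = x' := by
  rcases P with _ | ⟨x, y, h⟩
  · exact absurd (by simpa [← zero_def] using hP.symm) (some_ne_zero h')
  by_cases hy : y = W.negY x y
  · rw [two_smul, add_self_of_Y_eq hy] at hP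
    exact absurd hP.symm (some_ne_zero h')
  · rw [two_smul, add_self_of_Y_ne hy, some.injEq] at hP
    exact ⟨x, y, h, rfl, hy, hP.1⟩

lemma two_smul_some_eq_or_eq_neg {h : W.Nonsingular x y} (hy : y ≠ W.negY x y)
    {h' : W.Nonsingular x' y'} (hx : W.addX x x (W.slope x x y y) = x') :
    2 • some x y h = some x' y' h' ∨ 2 • some x y h = -some x' y' h' := by
  rw [two_smul, add_self_of_Y_ne hy]
  exact X_eq_iff.mp hx

lemma exists_two_smul_eq_some_of_addX_eq {h : W.Nonsingular x y} (hy : y ≠ W.negY x y)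
    {h' : W.Nonsingular x' y'} (hx : W.addX x x (W.slope x x y y) = x') :
    ∃ R : W.Point, 2 • R = some x' y' h' := by
  rcases two_smul_some_eq_or_eq_neg hy hx (h := h) (h' := h') with h | h
  exacts [⟨_, h⟩, ⟨-_, by rw [smul_neg, h, neg_neg]⟩]

lemma two_smul_some_eq_of_Y_eq_negY {h : W.Nonsingular x y} (hy : y ≠ W.negY x y)
    {h' : W.Nonsingular x' y'} (hx : W.addX x x (W.slope x x y y) = x')
    (hy' : y' = W.negY x' y') : 2 • some x y h = some x' y' h' := by
  rcases two_smul_some_eq_or_eq_neg hy hx (h := h) (h' := h') with h | h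
  · exact h
  · rw [h, neg_some]
    simp only [← hy']

end WeierstrassCurve.Affine.Point

open WeierstrassCurve.Affine

section cubicCurve

variable {K : Type*} [Field K] {α₁ α₂ α₃ x y : K}

lemma cubicCurve_rotate (α₁ α₂ α₃ : K) : cubicCurve α₁ α₂ α₃ = cubicCurve α₂ α₃ α₁ := by
  ext <;> simp only [cubicCurve] <;> ring

lemma cubicCurve_equation_iff :
    (cubicCurve α₁ α₂ α₃).Equation x y ↔ y ^ 2 = (x - α₁) * (x - α₂) * (x - α₃) := by
  rw [equation_iff]
  simp only [cubicCurve]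
  constructor <;> intro h <;> linear_combination h

lemma cubicCurve_negY : (cubicCurve α₁ α₂ α₃).negY x y = -y := by
  simp [cubicCurve]

lemma cubicCurve_Y_ne_negY_iff (h2 : (2 : K) ≠ 0) :
    y ≠ (cubicCurve α₁ α₂ α₃).negY x y ↔ y ≠ 0 := by
  rw [cubicCurve_negY, not_iff_not, eq_neg_iff_add_eq_zero, ← two_mul, mul_eq_zero,
    or_iff_right h2]

lemma cubicCurve_nonsingular (h2 : (2 : K) ≠ 0) (hy : y ≠ 0)
    (h : y ^ 2 = (x - α₁) * (x - α₂) * (x - α₃)) : (cubicCurve α₁ α₂ α₃).Nonsingular x y :=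
  (nonsingular_iff x y).mpr
    ⟨cubicCurve_equation_iff.mpr h, .inr ((cubicCurve_Y_ne_negY_iff h2).mpr hy)⟩

variable [DecidableEq K]

lemma cubicCurve_slope_self (h2 : (2 : K) ≠ 0) (hy : y ≠ 0) :
    (cubicCurve α₁ α₂ α₃).slope x x y y =
      ((x - α₂) * (x - α₃) + (x - α₁) * (x - α₃) + (x - α₁) * (x - α₂)) / (2 * y) := by
  rw [slope_of_Y_ne rfl ((cubicCurve_Y_ne_negY_iff h2).mpr hy), cubicCurve_negY]
  simp only [cubicCurve]
  congr 1 <;> ring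

lemma cubicCurve_addX_sub_eq_sq (h2 : (2 : K) ≠ 0) (hy : y ≠ 0)
    (h : (cubicCurve α₁ α₂ α₃).Equation x y) :
    (cubicCurve α₁ α₂ α₃).addX x x ((cubicCurve α₁ α₂ α₃).slope x x y y) - α₁ =
      (((x - α₁) ^ 2 - (α₁ - α₂) * (α₁ - α₃)) / (2 * y)) ^ 2 := by
  rw [cubicCurve_slope_self h2 hy]
  rw [cubicCurve_equation_iff] at h
  simp only [addX, cubicCurve]
  field_simp
  linear_combination (4 * (α₂ + α₃ - 2 * x)) * h

lemma cubicCurve_addX_eq_sq (h2 : (2 : K) ≠ 0) (hy : y ≠ 0)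
    (h : (cubicCurve α₁ α₂ 0).Equation x y) :
    (cubicCurve α₁ α₂ 0).addX x x ((cubicCurve α₁ α₂ 0).slope x x y y) =
      ((x ^ 2 - α₁ * α₂) / (2 * y)) ^ 2 := by
  rw [← cubicCurve_rotate] at h ⊢
  rw [← sub_zero (addX ..), cubicCurve_addX_sub_eq_sq h2 hy h]
  ring

lemma cubicCurve_addX_add_one_eq_sq (h2 : (2 : K) ≠ 0) (hy : y ≠ 0)
    (h : (cubicCurve α₁ (-1) 0).Equation x y) :
    (cubicCurve α₁ (-1) 0).addX x x ((cubicCurve α₁ (-1) 0).slope x x y y) + 1 =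
      (((x + 1) ^ 2 - (1 + α₁)) / (2 * y)) ^ 2 := by
  rw [cubicCurve_rotate] at h ⊢
  rw [← sub_neg_eq_add, cubicCurve_addX_sub_eq_sq h2 hy h]
  ring

lemma cubicCurve_sq_eq_of_addX_eq_zero (h2 : (2 : K) ≠ 0) (hy : y ≠ 0)
    (h : (cubicCurve α₁ α₂ 0).Equation x y)
    (h₀ : (cubicCurve α₁ α₂ 0).addX x x ((cubicCurve α₁ α₂ 0).slope x x y y) = 0) :
    x ^ 2 = α₁ * α₂ := by
  rw [cubicCurve_addX_eq_sq h2 hy h, pow_eq_zero_iff two_ne_zero, div_eq_zero_iff,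
    or_iff_left (mul_ne_zero h2 hy)] at h₀
  exact sub_eq_zero.mp h₀

end cubicCurve

section GoodParam

variable {K : Type*} [Field K] {A B : K}

lemma add_ne_zero_and_sub_one_div_div_two (h2 : (2 : K) ≠ 0) (hB : B ^ 2 = A ^ 2 + 1) :
    A + B ≠ 0 ∧ (A + B - 1 / (A + B)) / 2 = A := by
  have hprod : (A + B) * (B - A) = 1 := by linear_combination hB
  refine ⟨left_ne_zero_of_mul_eq_one hprod, ?_⟩
  rw [one_div, inv_eq_of_mul_eq_one_right hprod]
  field_simp
  ring

lemma goodParam_add (h2 : (2 : K) ≠ 0) (hB : B ^ 2 = A ^ 2 + 1) (hA : A ≠ 0)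
    (hA₁ : A ^ 2 ≠ 1) (hA₂ : A ^ 2 ≠ -1) : GoodParam (A + B) := by
  obtain ⟨hc, hcA⟩ := add_ne_zero_and_sub_one_div_div_two h2 hB
  refine ⟨hc, fun h ↦ hA ?_, fun h ↦ hA ?_, by rwa [hcA], by rwa [hcA]⟩ <;>
    rw [← hcA, h] <;> norm_num

lemma exists_goodParam_of_sq {lam ξ : K} (h2 : (2 : K) ≠ 0) (h0 : lam ≠ 0) (h1 : lam ≠ 1)
    (hm1 : lam ≠ -1) (hξ : ξ ^ 2 = lam ^ 2) (hA : ξ = A ^ 2) (hB : ξ + 1 = B ^ 2) :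
    ∃ c : K, GoodParam c ∧
      (lam = ((c - 1 / c) / 2) ^ 2 ∨ lam = -(((c - 1 / c) / 2) ^ 2)) := by
  have hB' : B ^ 2 = A ^ 2 + 1 := by rw [← hA, hB]
  have hA' : A ^ 2 = lam ∨ A ^ 2 = -lam := hA ▸ sq_eq_sq_iff_eq_or_eq_neg.mp hξ
  obtain ⟨hA₀, hA₁, hA₂⟩ : A ^ 2 ≠ 0 ∧ A ^ 2 ≠ 1 ∧ A ^ 2 ≠ -1 := by
    rcases hA' with h | h <;> rw [h]
    · exact ⟨h0, h1, hm1⟩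
    · exact ⟨neg_ne_zero.mpr h0, fun h ↦ hm1 (neg_eq_iff_eq_neg.mp h), fun h ↦ h1 (neg_inj.mp h)⟩
  refine ⟨A + B, goodParam_add h2 hB' (pow_ne_zero_iff two_ne_zero |>.mp hA₀) hA₁ hA₂, ?_⟩
  rw [(add_ne_zero_and_sub_one_div_div_two h2 hB').2]
  rcases hA' with h | h
  · exact .inl h.symm
  · exact .inr (by rw [h, neg_neg])

lemma GoodParam.factors_ne_zero {c : K} (h2 : (2 : K) ≠ 0) (hc : GoodParam c) :
    (c - 1 / c) / 2 ≠ 0 ∧ (c + 1 / c) / 2 ≠ 0 ∧ 1 + (c - 1 / c) / 2 ≠ 0 ∧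
      1 + (c + 1 / c) / 2 ≠ 0 := by
  obtain ⟨hc₀, hc₁, hc₂, ha₁, ha₂⟩ := hc
  have hb : ((c + 1 / c) / 2) ^ 2 = ((c - 1 / c) / 2) ^ 2 + 1 := by field_simp; ring
  have ha₀ : (c - 1 / c) / 2 ≠ 0 := by
    intro h
    have : (c - 1) * (c + 1) = 0 := by field_simp at h; linear_combination h
    rcases mul_eq_zero.mp this with h | h
    exacts [hc₁ (sub_eq_zero.mp h), hc₂ (eq_neg_of_add_eq_zero_left h)]
  refine ⟨ha₀, fun h ↦ ha₂ ?_, fun h ↦ ha₁ ?_, fun h ↦ ha₀ (pow_eq_zero_iff two_ne_zero |>.mp ?_)⟩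
  · linear_combination h * ((c + 1 / c) / 2) - hb
  · linear_combination h * ((c - 1 / c) / 2 - 1)
  · linear_combination h * ((c + 1 / c) / 2 - 1) - hb

end GoodParam

lemma exists_four_smul_eq_of_goodParam {K : Type*} [Field K] [DecidableEq K] {c μ : K}
    (h2 : (2 : K) ≠ 0) (hc : GoodParam c) (hμ : μ = ((c - 1 / c) / 2) ^ 4)
    (hW : (cubicCurve (-μ) (-1) 0).Nonsingular 0 0) :
    ∃ R : (cubicCurve (-μ) (-1) 0).Point, 4 • R = Point.some 0 0 hW := by
  obtain ⟨ha₀, hb₀, ha₁, hb₁⟩ := hc.factors_ne_zero h2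
  have hc₀ : c ≠ 0 := hc.1
  generalize ha : (c - 1 / c) / 2 = a at *
  generalize hb : (c + 1 / c) / 2 = b at *
  subst hμ
  have hyR : a * b * c * (1 + a) * (1 + b) ≠ 0 := by simp [ha₀, hb₀, hc₀, ha₁, hb₁]
  have hyQ : a ^ 2 * b ^ 2 ≠ 0 := by simp [ha₀, hb₀]
  have hR : (cubicCurve (-a ^ 4) (-1) 0).Nonsingular (a * c * (1 + b))
      (a * b * c * (1 + a) * (1 + b)) :=
    cubicCurve_nonsingular h2 hyR (by subst ha hb; field_simp; ring)
  have hQ : (cubicCurve (-a ^ 4) (-1) 0).Nonsingular (a ^ 2) (a ^ 2 * b ^ 2) :=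
    cubicCurve_nonsingular h2 hyQ (by subst ha hb; field_simp; ring)
  obtain ⟨R, hRQ⟩ : ∃ R : (cubicCurve (-a ^ 4) (-1) 0).Point, 2 • R = .some _ _ hQ := by
    refine Point.exists_two_smul_eq_some_of_addX_eq (h := hR)
      ((cubicCurve_Y_ne_negY_iff h2).mpr hyR) ?_
    rw [cubicCurve_addX_eq_sq h2 hyR hR.1, div_pow,
      div_eq_iff (pow_ne_zero 2 (mul_ne_zero h2 hyR))]
    subst ha hb; field_simp; ring
  have hQW : 2 • Point.some _ _ hQ = Point.some 0 0 hW := by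
    refine Point.two_smul_some_eq_of_Y_eq_negY ((cubicCurve_Y_ne_negY_iff h2).mpr hyQ) ?_
      (by rw [cubicCurve_negY, neg_zero])
    rw [cubicCurve_addX_eq_sq h2 hyQ hQ.1]
    ring
  exact ⟨R, by rw [← hQW, ← hRQ, ← mul_smul]; rfl⟩

open Classical in
theorem W3_div_four_iff {K : Type*} [Field K] (h2 : (2 : K) ≠ 0)
    (lam : K) (h0 : lam ≠ 0) (h1 : lam ≠ 1) (hm1 : lam ≠ -1)
    (hW : (cubicCurve (-(lam ^ 2)) (-1) 0).Nonsingular 0 0) :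
    (∃ R : (cubicCurve (-(lam ^ 2)) (-1) 0).Point,
        4 • R = WeierstrassCurve.Affine.Point.some _ _ hW) ↔
      ∃ c : K, GoodParam c ∧
        (lam = ((c - 1 / c) / 2) ^ 2 ∨ lam = -(((c - 1 / c) / 2) ^ 2)) := by
  constructor
  · rintro ⟨R, hR⟩
    obtain ⟨ξ, η, hQ, hRQ, hη, hξ⟩ :=
      Point.exists_eq_some_of_two_smul_eq_some (P := 2 • R) (by rwa [← mul_smul])
    obtain ⟨x, y, hP, -, hy, rfl⟩ := Point.exists_eq_some_of_two_smul_eq_some hRQ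
    rw [cubicCurve_Y_ne_negY_iff h2] at hη hy
    exact exists_goodParam_of_sq h2 h0 h1 hm1
      (by linear_combination cubicCurve_sq_eq_of_addX_eq_zero h2 hη hQ.1 hξ)
      (cubicCurve_addX_eq_sq h2 hy hP.1) (cubicCurve_addX_add_one_eq_sq h2 hy hP.1)
  · rintro ⟨c, hc, hlam⟩
    exact exists_four_smul_eq_of_goodParam h2 hc (by rcases hlam with rfl | rfl <;> ring) hW
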